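/- With A and B as above satisfying A B^p = B^q A (so ℓ divides q^(n+1) − p^(n+1)), the diagonal entries λ, λ^s, ..., λ^(s^n) of B are pairwise distinct if and only if ℓ does not divide q^k − p^k for any k with 1 ≤ k ≤ n. -/

import Mathlib

/-!
Reducing exponents modulo `ℓ`, the entries `λ^(s^i)` are pairwise distinct exactly when the
powers `1, s, …, s^n` are distinct in `ZMod ℓ`, i.e. when `n` is less than the order of `s`.
Since `p ≡ q s` with `q` a unit, `ℓ ∣ q^k - p^k` says precisely `s^k = 1`, so the order of `s`
divides `n + 1`, and it exceeds `n` if and only if `ℓ ∤ q^k - p^k` for `1 ≤ k ≤ n`.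
-/

theorem IsPrimitiveRoot.zpow_eq_zpow_iff {G₀ : Type*} [CommGroupWithZero G₀] {ζ : G₀}
    {k : ℕ} (h : IsPrimitiveRoot ζ k) (hk : k ≠ 0) (a b : ℤ) :
    ζ ^ a = ζ ^ b ↔ (a : ZMod k) = b := by
  have hζ : ζ ≠ 0 := h.ne_zero hk
  rw [ZMod.intCast_eq_intCast_iff, Int.modEq_iff_dvd, ← h.zpow_eq_one_iff_dvd, zpow_sub₀ hζ,
    div_eq_one_iff_eq (zpow_ne_zero _ hζ), eq_comm]

theorem ZMod.isUnit_intCast_of_gcd_eq_one {ℓ : ℕ} {q : ℤ} (h : Int.gcd q ℓ = 1) :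
    IsUnit (q : ZMod ℓ) :=
  (ZMod.coe_int_isUnit_iff_isCoprime q ℓ).mpr
    (isCoprime_comm.mp (Int.isCoprime_iff_gcd_eq_one.mpr h))

theorem dvd_pow_sub_pow_iff_pow_eq_one {ℓ : ℕ} {p q s : ℤ} (hq : IsUnit (q : ZMod ℓ))
    (hpqs : p ≡ q * s [ZMOD ℓ]) (k : ℕ) :
    (ℓ : ℤ) ∣ q ^ k - p ^ k ↔ (s : ZMod ℓ) ^ k = 1 := by
  have hp : (p : ZMod ℓ) = q * s := by
    simpa using (ZMod.intCast_eq_intCast_iff _ _ _).mpr hpqs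
  rw [← ZMod.intCast_zmod_eq_zero_iff_dvd]
  push_cast
  rw [sub_eq_zero, hp, mul_pow, eq_comm]
  exact (hq.pow k).mul_eq_left

section OrderOf

variable {M : Type*} [Monoid M] {x : M} {n : ℕ}

theorem IsOfFinOrder.injective_pow_fin_iff_lt_orderOf (hx : IsOfFinOrder x) :
    Function.Injective (fun i : Fin (n + 1) ↦ x ^ (i : ℕ)) ↔ n < orderOf x := by
  refine ⟨fun hinj ↦ ?_, fun hlt i j hij ↦ ?_⟩
  · by_contra! hle
    have h := @hinj ⟨orderOf x, by omega⟩ ⟨0, by omega⟩ (by simp [pow_orderOf_eq_one])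
    exact hx.orderOf_pos.ne' (Fin.mk.inj_iff.mp h)
  · exact Fin.ext (pow_injOn_Iio_orderOf (Set.mem_Iio.mpr (by omega))
      (Set.mem_Iio.mpr (by omega)) hij)

theorem IsOfFinOrder.forall_pow_ne_one_iff_lt_orderOf (hx : IsOfFinOrder x) :
    (∀ k : ℕ, 1 ≤ k → k ≤ n → x ^ k ≠ 1) ↔ n < orderOf x := by
  refine ⟨fun h ↦ ?_, fun hlt k hk hkn ↦ pow_ne_one_of_lt_orderOf (by omega) (by omega)⟩
  by_contra! hle
  exact h _ hx.orderOf_pos hle (pow_orderOf_eq_one x)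

end OrderOf

theorem stmt11_general (n : ℕ) (p q s : ℤ) (ℓ : ℕ) (hℓ : 0 < ℓ) (lam : ℂ)
    (hlam : IsPrimitiveRoot lam ℓ) (hqℓ : Int.gcd q ℓ = 1)
    (hpqs : p ≡ q * s [ZMOD ℓ]) (hdvd : (ℓ : ℤ) ∣ q ^ (n + 1) - p ^ (n + 1)) :
    (∀ i j : Fin (n + 1), lam ^ (s ^ (i : ℕ)) = lam ^ (s ^ (j : ℕ)) → i = j)
      ↔ ∀ k : ℕ, 1 ≤ k → k ≤ n → ¬ ((ℓ : ℤ) ∣ q ^ k - p ^ k) := by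
  have hdvd_iff := dvd_pow_sub_pow_iff_pow_eq_one (ZMod.isUnit_intCast_of_gcd_eq_one hqℓ) hpqs
  have hfin : IsOfFinOrder (s : ZMod ℓ) :=
    isOfFinOrder_iff_pow_eq_one.mpr ⟨n + 1, n.succ_pos, (hdvd_iff _).mp hdvd⟩
  have hentries (i j : ℕ) :
      lam ^ (s ^ i) = lam ^ (s ^ j) ↔ (s : ZMod ℓ) ^ i = (s : ZMod ℓ) ^ j := by
    rw [hlam.zpow_eq_zpow_iff hℓ.ne', Int.cast_pow, Int.cast_pow]
  simp only [hentries, hdvd_iff]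
  exact hfin.injective_pow_fin_iff_lt_orderOf.trans hfin.forall_pow_ne_one_iff_lt_orderOf.symm

theorem stmt11 (n : ℕ) (p q s : ℤ) (ℓ : ℕ) (hℓ : 0 < ℓ) (lam : ℂ)
    (hlam : IsPrimitiveRoot lam ℓ) (hpℓ : Int.gcd p ℓ = 1) (hqℓ : Int.gcd q ℓ = 1)
    (hpqs : p ≡ q * s [ZMOD ℓ]) (hdvd : (ℓ : ℤ) ∣ q ^ (n + 1) - p ^ (n + 1)) :
    (∀ i j : Fin (n + 1), lam ^ (s ^ (i : ℕ)) = lam ^ (s ^ (j : ℕ)) → i = j)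
      ↔ ∀ k : ℕ, 1 ≤ k → k ≤ n → ¬ ((ℓ : ℤ) ∣ q ^ k - p ^ k) :=
  stmt11_general n p q s ℓ hℓ lam hlam hqℓ hpqs hdvd
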